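/- Let 0 < q < 1, u, v > 0, and α > 0. Then N_q(x^{α-1})(u;v) = ((1-q)^{α-1}/v^α) u^{α-1} Γ_q(α), where N_q is the series-defined q-Natural transform of the first type and Γ_q(α) = (q;q)_∞/(q^α;q)_∞ (1-q)^{1-α}. -/

import Mathlib

/-- The q-Pochhammer symbol `(a;q)_n`. -/
noncomputable def qPoch (q a : ℝ) (n : ℕ) : ℝ := ∏ k ∈ Finset.range n, (1 - a * q ^ k)

/-- `(a;q)_∞`. -/
noncomputable def qPochInf (q a : ℝ) : ℝ := ∏' k : ℕ, (1 - a * q ^ k)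

/-- The first-type q-Natural transform. -/
noncomputable def qNatural (q : ℝ) (f : ℝ → ℝ) (u v : ℝ) : ℝ :=
  qPochInf q q / v * ∑' k : ℕ, q ^ k * f (u / v * q ^ k) / qPoch q q k

/-- The q-gamma function `Γ_q(α) = (q;q)_∞/(q^α;q)_∞ · (1-q)^{1-α}`. -/
noncomputable def qGamma (q x : ℝ) : ℝ :=
  qPochInf q q / qPochInf q (q ^ x) * (1 - q) ^ (1 - x)

/-!
Substituting `x = (u/v) qᵏ` turns the series of `N_q(x^{α-1})(u;v)` into `(u/v)^{α-1}` times the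
q-exponential `e_q(z) = ∑ zᵏ/(q;q)ₖ` at `z = q^α`, so everything rests on Euler's identity
`(z;q)_∞ e_q(z) = 1`. That identity follows from the functional equation `e_q(qz) = (1 - z) e_q(z)`:
iterating gives `e_q(qⁿz) = (z;q)ₙ e_q(z)`, and `e_q(qⁿz) → e_q(0) = 1` by dominated convergence.
-/

open Filter Topology

section Euler

variable {q z : ℝ}

lemma multipliable_one_sub_mul_pow (hq : |q| < 1) (z : ℝ) :
    Multipliable fun k : ℕ => 1 - z * q ^ k := by
  have hs : Summable fun k : ℕ => ‖-(z * q ^ k)‖ := by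
    simpa [abs_mul, abs_pow] using (summable_geometric_of_lt_one (abs_nonneg q) hq).mul_left |z|
  simpa [sub_eq_add_neg] using multipliable_one_add_of_summable hs

lemma tendsto_qPoch_qPochInf (hq : |q| < 1) (z : ℝ) :
    Tendsto (qPoch q z) atTop (𝓝 (qPochInf q z)) :=
  (multipliable_one_sub_mul_pow hq z).hasProd.tendsto_prod_nat

lemma qPoch_succ (q z : ℝ) (n : ℕ) : qPoch q z (n + 1) = qPoch q z n * (1 - z * q ^ n) :=
  Finset.prod_range_succ _ n

lemma one_sub_self_mul_pow_ne_zero (hq : |q| < 1) (n : ℕ) : 1 - q * q ^ n ≠ 0 := by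
  rw [← pow_succ', sub_ne_zero]
  exact fun h => (pow_lt_one₀ (abs_nonneg q) hq n.succ_ne_zero).ne (by rw [← abs_pow, ← h, abs_one])

lemma qPoch_self_ne_zero (hq : |q| < 1) (n : ℕ) : qPoch q q n ≠ 0 :=
  Finset.prod_ne_zero_iff.2 fun k _ => one_sub_self_mul_pow_ne_zero hq k

noncomputable def qExp (q z : ℝ) : ℝ := ∑' k : ℕ, z ^ k / qPoch q q k

lemma summable_norm_qExp (hq : |q| < 1) (hz : |z| < 1) :
    Summable fun k : ℕ => ‖z ^ k / qPoch q q k‖ := by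
  obtain ⟨r, hzr, hr⟩ := exists_between hz
  refine summable_of_ratio_norm_eventually_le hr ?_
  have hratio : Tendsto (fun n : ℕ => |z| / |1 - q * q ^ n|) atTop (𝓝 |z|) := by
    have h := ((tendsto_pow_atTop_nhds_zero_of_abs_lt_one hq).const_mul q).const_sub 1 |>.abs
    simpa [Pi.div_def] using tendsto_const_nhds.div h (by simp)
  filter_upwards [hratio.eventually_le_const hzr] with n hn
  rw [qPoch_succ, pow_succ, norm_norm, norm_norm, norm_div, norm_div, norm_mul, norm_mul,
    Real.norm_eq_abs (1 - _), mul_div_mul_comm, mul_comm r]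
  exact mul_le_mul_of_nonneg_left (by rwa [Real.norm_eq_abs]) (by positivity)

lemma summable_qExp (hq : |q| < 1) (hz : |z| < 1) :
    Summable fun k : ℕ => z ^ k / qPoch q q k :=
  (summable_norm_qExp hq hz).of_norm

lemma qExp_self_mul (hq : |q| < 1) (hz : |z| < 1) : qExp q (q * z) = (1 - z) * qExp q z := by
  have hqz : |q * z| < 1 := by
    rw [abs_mul]; exact mul_lt_one_of_nonneg_of_lt_one_left (abs_nonneg q) hq hz.le
  set g : ℕ → ℝ := fun k => z ^ k / qPoch q q k - (q * z) ^ k / qPoch q q k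
  have hg : Summable g := (summable_qExp hq hz).sub (summable_qExp hq hqz)
  have hg_succ (k : ℕ) : g (k + 1) = z * (z ^ k / qPoch q q k) := by
    have := one_sub_self_mul_pow_ne_zero hq k
    have := qPoch_self_ne_zero hq k
    simp only [g, qPoch_succ]
    field_simp
    ring
  have hdiff : qExp q z - qExp q (q * z) = z * qExp q z := by
    calc qExp q z - qExp q (q * z) = ∑' k, g k :=
          ((summable_qExp hq hz).tsum_sub (summable_qExp hq hqz)).symm
      _ = ∑' k, z * (z ^ k / qPoch q q k) := by
          rw [hg.tsum_eq_zero_add, tsum_congr hg_succ]; simp [g]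
      _ = z * qExp q z := tsum_mul_left
  linear_combination -hdiff

lemma qExp_pow_mul (hq : |q| < 1) (hz : |z| < 1) (n : ℕ) :
    qExp q (q ^ n * z) = qPoch q z n * qExp q z := by
  induction n with
  | zero => simp [qPoch]
  | succ n ih =>
    have hqz : |q ^ n * z| < 1 := by
      rw [abs_mul, abs_pow]
      exact mul_lt_one_of_nonneg_of_lt_one_right (pow_le_one₀ (abs_nonneg q) hq.le)
        (abs_nonneg z) hz
    rw [pow_succ', mul_assoc, qExp_self_mul hq hqz, ih, qPoch_succ]
    ring

@[simp]
lemma qExp_zero (q : ℝ) : qExp q 0 = 1 := by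
  rw [qExp, tsum_eq_single 0 fun k hk => by simp [hk]]
  simp [qPoch]

lemma tendsto_qExp_pow_mul (hq : |q| < 1) (hz : |z| < 1) :
    Tendsto (fun n : ℕ => qExp q (q ^ n * z)) atTop (𝓝 1) := by
  have hlim : Tendsto (fun n : ℕ => q ^ n * z) atTop (𝓝 0) := by
    simpa using (tendsto_pow_atTop_nhds_zero_of_abs_lt_one hq).mul_const z
  rw [← qExp_zero q]
  refine tendsto_tsum_of_dominated_convergence (summable_norm_qExp hq hz)
    (fun k => (hlim.pow k).div_const _) (Eventually.of_forall fun n k => ?_)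
  rw [norm_div, norm_div, norm_pow, norm_pow, norm_mul, norm_pow]
  gcongr
  exact mul_le_of_le_one_left (norm_nonneg z) (pow_le_one₀ (norm_nonneg q) hq.le)

lemma qPochInf_mul_qExp (hq : |q| < 1) (hz : |z| < 1) : qPochInf q z * qExp q z = 1 :=
  tendsto_nhds_unique ((tendsto_qPoch_qPochInf hq z).mul_const _)
    ((tendsto_qExp_pow_mul hq hz).congr (qExp_pow_mul hq hz))

end Euler

lemma pow_mul_mul_pow_rpow {q : ℝ} (hq : 0 < q) {c : ℝ} (hc : 0 ≤ c) (α : ℝ) (k : ℕ) :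
    q ^ k * (c * q ^ k) ^ (α - 1) = c ^ (α - 1) * (q ^ α) ^ k := by
  rw [Real.mul_rpow hc (by positivity), ← Real.rpow_natCast, ← Real.rpow_natCast,
    ← Real.rpow_mul hq.le, ← Real.rpow_mul hq.le, mul_left_comm, ← Real.rpow_add hq]
  ring_nf

lemma qNatural_rpow_eq_qExp {q u v : ℝ} (hq : 0 < q) (hu : 0 ≤ u) (hv : 0 ≤ v) (α : ℝ) :
    qNatural q (fun x => x ^ (α - 1)) u v
      = qPochInf q q / v * (u / v) ^ (α - 1) * qExp q (q ^ α) := by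
  simp only [qNatural, qExp, mul_div_assoc, pow_mul_mul_pow_rpow hq (div_nonneg hu hv)]
  rw [tsum_mul_left, mul_assoc]

/-- For `0 < q < 1`, `u, v > 0`, `α > 0`,
`N_q(x^{α-1})(u;v) = ((1-q)^{α-1}/v^α) u^{α-1} Γ_q(α)`. -/
theorem qNatural_rpow (q u v α : ℝ) (hq0 : 0 < q) (hq1 : q < 1)
    (hu : 0 < u) (hv : 0 < v) (hα : 0 < α) :
    qNatural q (fun x => x ^ (α - 1)) u v
      = (1 - q) ^ (α - 1) / v ^ α * u ^ (α - 1) * qGamma q α := by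
  have hq : |q| < 1 := by rwa [abs_of_pos hq0]
  have hqα : |q ^ α| < 1 := by
    rw [abs_of_nonneg (by positivity)]; exact Real.rpow_lt_one hq0.le hq1 hα
  have heuler := qPochInf_mul_qExp hq hqα
  have h1q : 0 < 1 - q := sub_pos.2 hq1
  rw [qNatural_rpow_eq_qExp hq0 hu.le hv.le, qGamma, eq_inv_of_mul_eq_one_right heuler,
    Real.div_rpow hu.le hv.le, Real.rpow_sub_one hv.ne', show 1 - α = -(α - 1) by ring,
    Real.rpow_neg h1q.le]
  field_simp
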